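/- arXiv:2509.25005 — 7 statements merged into one kernel-verified Lean document; each statement's English description precedes it below -/
import Mathlib

section
/- If L is a countable linear order colored by a countable set A such that L is dense without endpoints and every color class is dense, then the ordered sum L + L (with colors inherited from each summand) is isomorphic to L via a color-preserving order isomorphism. -/
/-!
Back and forth, as in Cantor's isomorphism theorem, with colors: a finite color-preserving
partial isomorphism can be extended at any point of either side, because a point of the
required color exists between any two finite sets whose elements are in order. Two countable
orders in which every color class is dense are therefore isomorphic by a color-preserving map,
and `L + L` is such an order whenever `L` is.
-/

section

variable {α β A : Type*} [LinearOrder α] [LinearOrder β]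

structure IsColorDense (c : α → A) : Prop where
  exists_between : ∀ (a : A) {x y : α}, x < y → ∃ z, x < z ∧ z < y ∧ c z = a
  exists_gt : ∀ (a : A) (x : α), ∃ z, x < z ∧ c z = a
  exists_lt : ∀ (a : A) (x : α), ∃ z, z < x ∧ c z = a

namespace IsColorDense

variable {cα : α → A} {cβ : β → A}

theorem sumLex (hα : IsColorDense cα) (hβ : IsColorDense cβ) :
    IsColorDense fun x : α ⊕ₗ β => Sum.elim cα cβ (ofLex x) where
  exists_between a x y hxy := by
    rcases x with x | x <;> rcases y with y | y
    · obtain ⟨z, hxz, hzy, hz⟩ := hα.exists_between a (Sum.Lex.inl_lt_inl_iff.mp hxy)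
      exact ⟨toLex (.inl z), Sum.Lex.inl_lt_inl_iff.mpr hxz, Sum.Lex.inl_lt_inl_iff.mpr hzy, hz⟩
    · obtain ⟨z, hxz, hz⟩ := hα.exists_gt a x
      exact ⟨toLex (.inl z), Sum.Lex.inl_lt_inl_iff.mpr hxz, Sum.Lex.inl_lt_inr _ _, hz⟩
    · exact (Sum.Lex.not_inr_lt_inl hxy).elim
    · obtain ⟨z, hxz, hzy, hz⟩ := hβ.exists_between a (Sum.Lex.inr_lt_inr_iff.mp hxy)
      exact ⟨toLex (.inr z), Sum.Lex.inr_lt_inr_iff.mpr hxz, Sum.Lex.inr_lt_inr_iff.mpr hzy, hz⟩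
  exists_gt a x := by
    rcases x with x | x
    · obtain ⟨z, hxz, hz⟩ := hα.exists_gt a x
      exact ⟨toLex (.inl z), Sum.Lex.inl_lt_inl_iff.mpr hxz, hz⟩
    · obtain ⟨z, hxz, hz⟩ := hβ.exists_gt a x
      exact ⟨toLex (.inr z), Sum.Lex.inr_lt_inr_iff.mpr hxz, hz⟩
  exists_lt a x := by
    rcases x with x | x
    · obtain ⟨z, hzx, hz⟩ := hα.exists_lt a x
      exact ⟨toLex (.inl z), Sum.Lex.inl_lt_inl_iff.mpr hzx, hz⟩
    · obtain ⟨z, hzx, hz⟩ := hβ.exists_lt a x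
      exact ⟨toLex (.inr z), Sum.Lex.inr_lt_inr_iff.mpr hzx, hz⟩

theorem exists_between_finsets [Nonempty β] (hβ : IsColorDense cβ) (a : A) (lo hi : Finset β)
    (lo_lt_hi : ∀ x ∈ lo, ∀ y ∈ hi, x < y) :
    ∃ m, cβ m = a ∧ (∀ x ∈ lo, x < m) ∧ ∀ y ∈ hi, m < y := by
  rcases lo.eq_empty_or_nonempty with rfl | hlo <;> rcases hi.eq_empty_or_nonempty with rfl | hhi
  · obtain ⟨z, -, hz⟩ := hβ.exists_gt a (Classical.arbitrary β)
    exact ⟨z, hz, by simp, by simp⟩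
  · obtain ⟨z, hz_lt, hz⟩ := hβ.exists_lt a (hi.min' hhi)
    exact ⟨z, hz, by simp, fun y hy => hz_lt.trans_le (hi.min'_le y hy)⟩
  · obtain ⟨z, hlt_z, hz⟩ := hβ.exists_gt a (lo.max' hlo)
    exact ⟨z, hz, fun x hx => (lo.le_max' x hx).trans_lt hlt_z, by simp⟩
  · obtain ⟨z, hlt_z, hz_lt, hz⟩ :=
      hβ.exists_between a (lo_lt_hi _ (lo.max'_mem hlo) _ (hi.min'_mem hhi))
    exact ⟨z, hz, fun x hx => (lo.le_max' x hx).trans_lt hlt_z,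
      fun y hy => hz_lt.trans_le (hi.min'_le y hy)⟩

theorem exists_across [Nonempty β] (hβ : IsColorDense cβ) (s : Finset (α × β))
    (hs : ∀ p ∈ s, ∀ q ∈ s, cmp p.1 q.1 = cmp p.2 q.2) (a : α) (ha : ∀ p ∈ s, p.1 ≠ a) :
    ∃ b, cβ b = cα a ∧ ∀ p ∈ s, cmp p.1 a = cmp p.2 b := by
  have lo_lt_hi : ∀ x ∈ {p ∈ s | p.1 < a}.image Prod.snd,
      ∀ y ∈ {p ∈ s | a < p.1}.image Prod.snd, x < y := by
    simp only [Finset.mem_image, Finset.mem_filter]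
    rintro _ ⟨p, ⟨hp, hpa⟩, rfl⟩ _ ⟨q, ⟨hq, haq⟩, rfl⟩
    exact (lt_iff_lt_of_cmp_eq_cmp (hs p hp q hq)).mp (hpa.trans haq)
  obtain ⟨b, hb, hlo, hhi⟩ := hβ.exists_between_finsets (cα a) _ _ lo_lt_hi
  refine ⟨b, hb, fun p hp => ?_⟩
  rcases (ha p hp).lt_or_gt with hpa | hap
  · have hpb := hlo _ (Finset.mem_image_of_mem _ (Finset.mem_filter.mpr ⟨hp, hpa⟩))
    rw [(cmp_eq_lt_iff _ _).mpr hpa, (cmp_eq_lt_iff _ _).mpr hpb]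
  · have hbp := hhi _ (Finset.mem_image_of_mem _ (Finset.mem_filter.mpr ⟨hp, hap⟩))
    rw [(cmp_eq_gt_iff _ _).mpr hap, (cmp_eq_gt_iff _ _).mpr hbp]

end IsColorDense

variable (cα : α → A) (cβ : β → A)

def ColoredPartialIso : Type _ :=
  { f : Finset (α × β) //
    (∀ p ∈ f, ∀ q ∈ f, cmp p.1 q.1 = cmp p.2 q.2) ∧ ∀ p ∈ f, cβ p.2 = cα p.1 }

namespace ColoredPartialIso

instance : Preorder (ColoredPartialIso cα cβ) := Subtype.preorder _

instance : Inhabited (ColoredPartialIso cα cβ) := ⟨⟨∅, by simp, by simp⟩⟩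

variable {cα cβ}

def insert (f : ColoredPartialIso cα cβ) (a : α) (b : β) (hab : cβ b = cα a)
    (h : ∀ p ∈ f.val, cmp p.1 a = cmp p.2 b) : ColoredPartialIso cα cβ :=
  ⟨Insert.insert (a, b) f.val, by
    simp only [Finset.mem_insert]
    rintro p (rfl | hp) q (rfl | hq)
    · simp
    · rw [cmp_eq_cmp_symm]; exact h q hq
    · exact h p hp
    · exact f.prop.1 p hp q hq,
    by
    simp only [Finset.mem_insert]
    rintro p (rfl | hp)
    · exact hab
    · exact f.prop.2 p hp⟩

theorem le_insert (f : ColoredPartialIso cα cβ) (a : α) (b : β) (hab h) :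
    f ≤ f.insert a b hab h :=
  Finset.subset_insert _ _

theorem mem_insert (f : ColoredPartialIso cα cβ) (a : α) (b : β) (hab h) :
    (a, b) ∈ (f.insert a b hab h).val :=
  Finset.mem_insert_self _ _

variable (cα)

def definedAtLeft [Nonempty β] (hβ : IsColorDense cβ) (a : α) :
    Order.Cofinal (ColoredPartialIso cα cβ) where
  carrier := {f | ∃ b, (a, b) ∈ f.val}
  isCofinal f := by
    by_cases ha : ∃ b, (a, b) ∈ f.val
    · exact ⟨f, ha, le_rfl⟩
    push Not at ha
    obtain ⟨b, hb, h⟩ := hβ.exists_across f.val f.prop.1 a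
      (fun p hp hpa => ha p.2 (hpa ▸ hp))
    exact ⟨f.insert a b hb h, ⟨b, f.mem_insert a b hb h⟩, f.le_insert a b hb h⟩

variable {cα} (cβ)

/-- Extension on the right is extension on the left for the transposed relation. -/
def definedAtRight [Nonempty α] (hα : IsColorDense cα) (b : β) :
    Order.Cofinal (ColoredPartialIso cα cβ) where
  carrier := {f | ∃ a, (a, b) ∈ f.val}
  isCofinal f := by
    by_cases hb : ∃ a, (a, b) ∈ f.val
    · exact ⟨f, hb, le_rfl⟩
    push Not at hb
    have hs : ∀ p ∈ f.val.image Prod.swap, ∀ q ∈ f.val.image Prod.swap,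
        cmp p.1 q.1 = cmp p.2 q.2 := by
      simp only [Finset.mem_image]
      rintro _ ⟨p, hp, rfl⟩ _ ⟨q, hq, rfl⟩
      exact (f.prop.1 p hp q hq).symm
    have hsb : ∀ p ∈ f.val.image Prod.swap, p.1 ≠ b := by
      simp only [Finset.mem_image]
      rintro _ ⟨⟨a, b'⟩, hp, rfl⟩ rfl
      exact hb a hp
    obtain ⟨a, ha, h⟩ := hα.exists_across _ hs b hsb
    simp only [Finset.mem_image] at h
    exact ⟨f.insert a b ha.symm fun p hp => (h p.swap ⟨p, hp, rfl⟩).symm,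
      ⟨a, f.mem_insert ..⟩, f.le_insert ..⟩

end ColoredPartialIso

open ColoredPartialIso in
theorem exists_orderIso_of_isColorDense [Countable α] [Countable β] [Nonempty α] [Nonempty β]
    {cα : α → A} {cβ : β → A} (hα : IsColorDense cα) (hβ : IsColorDense cβ) :
    ∃ e : α ≃o β, ∀ a, cβ (e a) = cα a := by
  cases nonempty_encodable α
  cases nonempty_encodable β
  let C : α ⊕ β → Order.Cofinal (ColoredPartialIso cα cβ) :=
    Sum.elim (definedAtLeft cα hβ) (definedAtRight cβ hα)
  let I := Order.idealOfCofinals default C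
  have hF (a : α) : ∃ b, ∃ f ∈ I, (a, b) ∈ f.val := by
    obtain ⟨f, ⟨b, hb⟩, hf⟩ := Order.cofinal_meets_idealOfCofinals default C (Sum.inl a)
    exact ⟨b, f, hf, hb⟩
  have hG (b : β) : ∃ a, ∃ f ∈ I, (a, b) ∈ f.val := by
    obtain ⟨f, ⟨a, ha⟩, hf⟩ := Order.cofinal_meets_idealOfCofinals default C (Sum.inr b)
    exact ⟨a, f, hf, ha⟩
  choose F hF using hF
  choose G hG using hG
  have cmp_eq (a : α) (b : β) : cmp a (G b) = cmp (F a) b := by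
    obtain ⟨f, hf, ha⟩ := hF a
    obtain ⟨g, hg, hb⟩ := hG b
    obtain ⟨m, -, hfm, hgm⟩ := I.directed _ hf _ hg
    exact m.prop.1 _ (hfm ha) _ (hgm hb)
  refine ⟨OrderIso.ofCmpEqCmp F G cmp_eq, fun a => ?_⟩
  obtain ⟨f, -, ha⟩ := hF a
  exact f.prop.2 _ ha

end

theorem colorShuffle_add_self_general {α A : Type*} [LinearOrder α] [Countable α]
    [Nonempty α]
    (c : α → A)
    (hd : ∀ (a : A) (x y : α), x < y → ∃ z, x < z ∧ z < y ∧ c z = a)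
    (hu : ∀ (a : A) (x : α), ∃ z, x < z ∧ c z = a)
    (hl : ∀ (a : A) (x : α), ∃ z, z < x ∧ c z = a) :
    ∃ e : (α ⊕ₗ α) ≃o α, ∀ x : α ⊕ₗ α, c (e x) = Sum.elim c c (ofLex x) := by
  have hc : IsColorDense c := ⟨fun a _ _ => hd a _ _, hu, hl⟩
  have : Countable (α ⊕ₗ α) := inferInstanceAs (Countable (α ⊕ α))
  have : Nonempty (α ⊕ₗ α) := inferInstanceAs (Nonempty (α ⊕ α))
  exact exists_orderIso_of_isColorDense (hc.sumLex hc) hc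

/-- The absorption law `Sh(A) + Sh(A) ≅ Sh(A)`: for a countable dense linear
order without endpoints colored by a countable set with every color class dense,
the lexicographic sum `L + L` is isomorphic to `L` via a color-preserving
order isomorphism. -/
theorem colorShuffle_add_self {α A : Type*} [LinearOrder α] [Countable α] [Countable A]
    [Nonempty α] [DenselyOrdered α] [NoMinOrder α] [NoMaxOrder α]
    (c : α → A)
    (hd : ∀ (a : A) (x y : α), x < y → ∃ z, x < z ∧ z < y ∧ c z = a)
    (hu : ∀ (a : A) (x : α), ∃ z, x < z ∧ c z = a)
    (hl : ∀ (a : A) (x : α), ∃ z, z < x ∧ c z = a) :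
    ∃ e : (α ⊕ₗ α) ≃o α, ∀ x : α ⊕ₗ α, c (e x) = Sum.elim c c (ofLex x) :=
  colorShuffle_add_self_general c hd hu hl
end

section
/- Every infinite block of a linear order is order-isomorphic to ω, ω*, or ζ, where ω is the natural numbers, ω* is the negative integers (ω reversed), and ζ is the integers. -/
/-- `x` and `y` are finitely far apart: the closed interval between them is finite. -/
def FinFar {α : Type*} [LinearOrder α] (x y : α) : Prop :=
  (Set.Icc (min x y) (max x y)).Finite

/-!
Intervals between elements of a block are finite, so a block is a locally finite linear order.
Such an order is the successor-archimedean orbit of any of its points: it is order-isomorphic to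
`ℕ` if it has a least element, to `ℕᵒᵈ` if it has a greatest one, and to `ℤ` if it has neither.
An infinite locally finite order cannot have both, since it would then equal the finite `Icc ⊥ ⊤`.
-/

namespace LinearLocallyFiniteOrder

variable {ι : Type*} [LinearOrder ι] [LocallyFiniteOrder ι]

lemma finite_of_isBot_of_isTop {b t : ι} (hb : IsBot b) (ht : IsTop t) : Finite ι :=
  Set.finite_univ_iff.mp <| (Set.finite_Icc b t).subset fun y _ => ⟨hb y, ht y⟩

lemma noMaxOrder_of_isBot [Infinite ι] {b : ι} (hb : IsBot b) : NoMaxOrder ι :=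
  have : NoTopOrder ι := noTopOrder_iff.mpr fun _ ht =>
    have := finite_of_isBot_of_isTop hb ht
    not_finite ι
  NoTopOrder.to_noMaxOrder ι

lemma nonempty_orderIso_nat_of_isBot [Infinite ι] {b : ι} (hb : IsBot b) :
    Nonempty (ι ≃o ℕ) :=
  letI := succOrder ι
  letI := predOrder ι
  letI : OrderBot ι := { bot := b, bot_le := hb }
  have := noMaxOrder_of_isBot hb
  ⟨orderIsoNatOfLinearSuccPredArch⟩

lemma nonempty_orderIso_natDual_of_isTop [Infinite ι] {t : ι} (ht : IsTop t) :
    Nonempty (ι ≃o ℕᵒᵈ) :=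
  have : Infinite ιᵒᵈ := ‹Infinite ι›
  (nonempty_orderIso_nat_of_isBot (ι := ιᵒᵈ) ht.toDual).map OrderIso.dual

lemma nonempty_orderIso_int [NoMinOrder ι] [NoMaxOrder ι] [Nonempty ι] : Nonempty (ι ≃o ℤ) :=
  letI := succOrder ι
  letI := predOrder ι
  ⟨orderIsoIntOfLinearSuccPredArch⟩

theorem nonempty_orderIso_nat_or_natDual_or_int [Infinite ι] :
    Nonempty (ι ≃o ℕ) ∨ Nonempty (ι ≃o ℕᵒᵈ) ∨ Nonempty (ι ≃o ℤ) := by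
  by_cases hbot : ∃ b : ι, IsBot b
  · exact Or.inl (nonempty_orderIso_nat_of_isBot hbot.choose_spec)
  by_cases htop : ∃ t : ι, IsTop t
  · exact Or.inr (Or.inl (nonempty_orderIso_natDual_of_isTop htop.choose_spec))
  have : NoBotOrder ι := noBotOrder_iff.mpr (not_exists.mp hbot)
  have : NoTopOrder ι := noTopOrder_iff.mpr (not_exists.mp htop)
  have := NoBotOrder.to_noMinOrder ι
  have := NoTopOrder.to_noMaxOrder ι
  exact Or.inr (Or.inr nonempty_orderIso_int)

end LinearLocallyFiniteOrder

section FinFar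

variable {α : Type*} [LinearOrder α] {x a b : α}

lemma FinFar.finite_Icc (ha : FinFar x a) (hb : FinFar x b) : (Set.Icc a b).Finite := by
  refine (ha.union hb).subset fun z hz => ?_
  rcases le_total z x with hzx | hxz
  · exact Or.inl ⟨(min_le_right x a).trans hz.1, hzx.trans (le_max_left x a)⟩
  · exact Or.inr ⟨(min_le_left x b).trans hxz, hz.2.trans (le_max_right x b)⟩

noncomputable instance (x : α) : LocallyFiniteOrder {y // FinFar x y} :=
  LocallyFiniteOrder.ofFiniteIcc fun a b =>
    (a.2.finite_Icc b.2).preimage Subtype.val_injective.injOn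

end FinFar

/-- Every infinite block of a linear order is order-isomorphic to `ω` (= ℕ),
`ω*` (= ℕ with the reversed order), or `ζ` (= ℤ). -/
theorem infinite_block_type {α : Type*} [LinearOrder α] (x : α)
    (h : {y | FinFar x y}.Infinite) :
    Nonempty ({y // FinFar x y} ≃o ℕ) ∨
    Nonempty ({y // FinFar x y} ≃o ℕᵒᵈ) ∨
    Nonempty ({y // FinFar x y} ≃o ℤ) :=
  have : Infinite {y // FinFar x y} := h.to_subtype
  LinearLocallyFiniteOrder.nonempty_orderIso_nat_or_natDual_or_int
end

section
/- Let a : ℕ → ℕ be defined by a(0) = 1 and a(n+1) = Σ_{i=1}^{n+1} C(n+1, i) · a(n+1-i). Then the exponential generating function f(X) = Σ_k a(k) X^k / k! satisfies the formal power series identity (2 - exp(X)) · f(X) = 1. -/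
/-! The recurrence says that the binomial convolution of `a` with the constant sequence `1`,
i.e. `∑ i, C(n,i) a(n-i)`, equals `2 a(n)` for `n ≥ 1` (the term `i = 0` contributes the extra
`a(n)`). Binomial convolution of sequences is multiplication of their exponential generating
functions, and `exp X` is the generating function of `1`, so `exp X * f = 2 f - 1`, the `-1`
coming from the constant term `a(0) = 1`. -/

open PowerSeries Finset Nat

theorem coeff_exp_mul_mk_div_factorial {K : Type*} [Field K] [Algebra ℚ K]
    (b : ℕ → K) (n : ℕ) :
    coeff n (exp K * mk fun k => b k / k !) =
      (∑ i ∈ range (n + 1), n.choose i * b (n - i)) / n ! := by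
  have := algebraRat.charZero K
  rw [coeff_mul, sum_antidiagonal_eq_sum_range_succ (fun i j => coeff i (exp K) * coeff j _),
    sum_div]
  refine sum_congr rfl fun i hi => ?_
  rw [coeff_exp, coeff_mk, cast_choose K (mem_range_succ_iff.mp hi), map_div₀, map_one,
    map_natCast]
  field_simp
  exact (mul_div_mul_right _ _ (cast_ne_zero.2 n.factorial_ne_zero)).symm

/-- If `a 0 = 1` and `a (n+1) = Σ_{i=1}^{n+1} C(n+1,i) a(n+1-i)` (the Fubini
numbers counting ordered set partitions), then the exponential generating
function `f` of `a` satisfies `(2 - exp X) * f = 1` in `ℚ[[X]]`. -/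
theorem fubini_egf (a : ℕ → ℕ) (ha0 : a 0 = 1)
    (ha : ∀ n, a (n + 1) = ∑ i ∈ Finset.Icc 1 (n + 1), (n + 1).choose i * a (n + 1 - i)) :
    (2 - PowerSeries.exp ℚ) *
      PowerSeries.mk (fun k => (a k : ℚ) / (Nat.factorial k : ℚ)) = 1 := by
  have hconv (n : ℕ) :
      ∑ i ∈ range (n + 2), (n + 1).choose i * a (n + 1 - i) = 2 * a (n + 1) := by
    rw [range_succ_eq_Icc_zero, ← insert_Icc_add_one_left_eq_Icc (Nat.zero_le _),
      sum_insert (by simp), zero_add, ← ha, choose_zero_right, Nat.sub_zero]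
    ring
  ext (_ | n)
  · norm_num [ha0, map_ofNat]
  · have hconv' :
        ∑ i ∈ range (n + 2), ((n + 1).choose i : ℚ) * a (n + 1 - i) = 2 * a (n + 1) := by
      exact_mod_cast hconv n
    rw [sub_mul, two_mul, map_sub, map_add, coeff_exp_mul_mk_div_factorial, hconv', coeff_mk,
      coeff_one, if_neg n.succ_ne_zero]
    ring
end

section
/- Let J : ℕ → ℕ be defined by J(0) = 1 and J(k+1) = 2(k+1)·J(k) + Σ_{i=2}^{k+1} C(k+1, i) · J(k+1-i). Then the exponential generating function f(X) = Σ_k J(k) X^k / k! satisfies the formal power series identity (2 - X - exp(X)) · f(X) = 1. -/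
/-!
Multiplying exponential generating functions is binomial convolution of their coefficient
sequences, and multiplying by `X` sends `a` to `n ↦ n * a (n - 1)`. The recurrence for `J`,
rewritten as `2 J(n) = [n = 0] + n J(n-1) + ∑ᵢ C(n,i) J(n-i)`, therefore says exactly that
`f = egf J` satisfies `2 f = 1 + X f + exp(X) f`.
-/

open PowerSeries Finset Nat

namespace PowerSeries

variable {K : Type*} [Field K]

def egf (a : ℕ → K) : K⟦X⟧ := mk fun n => a n / n !

@[simp]
theorem coeff_egf (a : ℕ → K) (n : ℕ) : coeff n (egf a) = a n / n ! := coeff_mk _ _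

theorem one_eq_egf : (1 : K⟦X⟧) = egf fun n => if n = 0 then 1 else 0 := by
  ext (_ | _) <;> simp

theorem exp_eq_egf [Algebra ℚ K] : exp K = egf 1 := by
  ext n
  simp [coeff_exp]

variable [CharZero K]

theorem coeff_X_mul_egf (a : ℕ → K) (n : ℕ) : coeff n (X * egf a) = n * a (n - 1) / n ! := by
  cases n with
  | zero => simp
  | succ n =>
    rw [coeff_succ_X_mul, coeff_egf, factorial_succ]
    push_cast
    field_simp

theorem coeff_egf_mul_egf (a b : ℕ → K) (n : ℕ) :
    coeff n (egf a * egf b) = (∑ i ∈ range (n + 1), n.choose i * a i * b (n - i)) / n ! := by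
  rw [coeff_mul, Nat.sum_antidiagonal_eq_sum_range_succ_mk, sum_div]
  refine sum_congr rfl fun i hi => ?_
  have : (n ! : K) ≠ 0 := Nat.cast_ne_zero.mpr n.factorial_ne_zero
  rw [coeff_egf, coeff_egf, cast_choose K (Nat.lt_succ_iff.mp (mem_range.mp hi))]
  field_simp

end PowerSeries

theorem two_mul_eq_binomial_sum {J : ℕ → ℕ} (hJ0 : J 0 = 1)
    (hJ : ∀ k, J (k + 1) =
      2 * (k + 1) * J k + ∑ i ∈ Icc 2 (k + 1), (k + 1).choose i * J (k + 1 - i)) (n : ℕ) :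
    2 * J n = (if n = 0 then 1 else 0) + n * J (n - 1) +
      ∑ i ∈ range (n + 1), n.choose i * J (n - i) := by
  cases n with
  | zero => simp [hJ0]
  | succ k =>
    rw [range_eq_Ico, ← sum_Ico_consecutive _ (by omega : 0 ≤ 2) (by omega : 2 ≤ k + 1 + 1),
      Ico_add_one_right_eq_Icc, ← range_eq_Ico]
    simp only [sum_range_succ, sum_range_zero, choose_zero_right, choose_one_right,
      Nat.sub_zero, Nat.add_sub_cancel, Nat.succ_ne_zero, if_false]
    rw [hJ k]
    ring

/-- If `J 0 = 1` and `J (k+1) = 2(k+1) J(k) + Σ_{i=2}^{k+1} C(k+1,i) J(k+1-i)`,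
then the exponential generating function `f` of `J` satisfies
`(2 - X - exp X) * f = 1` in `ℚ[[X]]`. -/
theorem homogColored_egf (J : ℕ → ℕ) (hJ0 : J 0 = 1)
    (hJ : ∀ k, J (k + 1) =
      2 * (k + 1) * J k + ∑ i ∈ Finset.Icc 2 (k + 1), (k + 1).choose i * J (k + 1 - i)) :
    (2 - PowerSeries.X - PowerSeries.exp ℚ) *
      PowerSeries.mk (fun k => (J k : ℚ) / (Nat.factorial k : ℚ)) = 1 := by
  change (2 - X - exp ℚ) * egf (fun k => (J k : ℚ)) = 1
  suffices h : 2 * egf (fun k => (J k : ℚ)) =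
      1 + X * egf (fun k => (J k : ℚ)) + exp ℚ * egf (fun k => (J k : ℚ)) by
    linear_combination h
  ext n
  have hrec : (2 * J n : ℚ) = (if n = 0 then 1 else 0) + n * J (n - 1) +
      ∑ i ∈ range (n + 1), (n.choose i : ℚ) * J (n - i) := by
    exact_mod_cast two_mul_eq_binomial_sum hJ0 hJ n
  rw [two_mul, one_eq_egf, exp_eq_egf]
  simp only [map_add, coeff_egf, coeff_X_mul_egf, coeff_egf_mul_egf, Pi.one_apply, mul_one]
  rw [← add_div, ← add_div, ← add_div, ← two_mul, hrec]
end

section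
/- For each n ≥ 1, the linear order ℚ + n + ℚ (the rationals, followed by a finite chain of n elements, followed by the rationals) is weakly homogeneous: there is a finite set P of elements such that every order isomorphism between finite subsets that fixes P pointwise extends to an order automorphism. -/
/-!
Take `P` to be the middle chain. An isomorphism of finite subsets fixing `P` fixes in particular
its least and greatest elements, so it maps points of the left copy of `ℚ` to the left copy and
points of the right copy to the right copy. On each copy it is thus a finite partial isomorphism
of `ℚ`, which Cantor's back-and-forth argument extends to an automorphism of `ℚ`; together with the
identity on the middle chain these two automorphisms give the required automorphism.
-/

/-- A linear order is weakly homogeneous if there is a finite exceptional set `P`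
such that every order isomorphism between finite subsets containing `P` that
fixes `P` pointwise extends to an order automorphism. -/
def WeaklyHomogeneousLO (α : Type*) [LinearOrder α] : Prop :=
  ∃ P : Finset α, ∀ (s t : Set α), s.Finite → t.Finite → ↑P ⊆ s →
    ∀ f : s ≃o t, (∀ (p : α) (hp : p ∈ s), p ∈ P → (f ⟨p, hp⟩ : α) = p) →
      ∃ g : α ≃o α, ∀ x : s, g x = (f x : α)

namespace Order.PartialIso

variable {α β : Type*} [LinearOrder α] [LinearOrder β]

theorem exists_orderIso_extends [Countable α] [DenselyOrdered α] [NoMinOrder α]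
    [NoMaxOrder α] [Nonempty α] [Countable β] [DenselyOrdered β] [NoMinOrder β]
    [NoMaxOrder β] [Nonempty β] (p : PartialIso α β) :
    ∃ g : α ≃o β, ∀ x ∈ p.val, g x.1 = x.2 := by
  cases nonempty_encodable α
  cases nonempty_encodable β
  let toCofinal : α ⊕ β → Cofinal (PartialIso α β) := fun x ↦
    Sum.recOn x (definedAtLeft β) (definedAtRight α)
  let I : Ideal (PartialIso α β) := idealOfCofinals p toCofinal
  let F a := funOfIdeal a I (cofinal_meets_idealOfCofinals _ toCofinal (Sum.inl a))
  let G b := invOfIdeal b I (cofinal_meets_idealOfCofinals _ toCofinal (Sum.inr b))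
  refine ⟨OrderIso.ofCmpEqCmp (fun a ↦ (F a).val) (fun b ↦ (G b).val) fun a b ↦ ?_, ?_⟩
  · obtain ⟨f, hf, ha⟩ := (F a).prop
    obtain ⟨g, hg, hb⟩ := (G b).prop
    obtain ⟨m, -, fm, gm⟩ := I.directed _ hf _ hg
    exact m.prop (a, _) (fm ha) (_, b) (gm hb)
  · rintro ⟨a, b⟩ hab
    obtain ⟨f, hf, ha⟩ := (F a).prop
    obtain ⟨m, -, fm, pm⟩ := I.directed _ hf _ (mem_idealOfCofinals p toCofinal)
    exact (eq_iff_eq_of_cmp_eq_cmp (m.prop (a, _) (fm ha) (a, b) (pm hab))).1 rfl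

variable {L : Type*} [LinearOrder L] {e : α → L} {s t : Set L}

noncomputable def induced (he : StrictMono e) (hs : s.Finite) (f : s ≃o t) : PartialIso α α :=
  ⟨Set.Finite.toFinset (s := {x | ∃ h : e x.1 ∈ s, (f ⟨e x.1, h⟩ : L) = e x.2}) <| by
    refine hs.of_injOn (f := fun x ↦ e x.1) (fun x ⟨h, _⟩ ↦ h) ?_
    rintro ⟨a, b⟩ ⟨ha, hb⟩ ⟨a', b'⟩ ⟨ha', hb'⟩ (h : e a = e a')
    obtain rfl := he.injective h
    exact Prod.ext rfl (he.injective (hb.symm.trans hb')),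
  by
    rintro ⟨a, b⟩ hab ⟨a', b'⟩ hab'
    simp only [Set.Finite.mem_toFinset, Set.mem_ofPred_eq] at hab hab'
    obtain ⟨ha, hb⟩ := hab
    obtain ⟨ha', hb'⟩ := hab'
    have hs := (Subtype.strictMono_coe (· ∈ s)).cmp_map_eq (⟨e a, ha⟩ : s) ⟨e a', ha'⟩
    have ht := (Subtype.strictMono_coe (· ∈ t) |>.comp f.strictMono).cmp_map_eq
      (⟨e a, ha⟩ : s) ⟨e a', ha'⟩
    simp only [Function.comp_apply, hb, hb', he.cmp_map_eq] at hs ht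
    rw [hs, ht]⟩

theorem mem_induced (he : StrictMono e) (hs : s.Finite) (f : s ≃o t) {a b : α}
    (h : e a ∈ s) (hf : (f ⟨e a, h⟩ : L) = e b) : (a, b) ∈ (induced he hs f).val :=
  (Set.Finite.mem_toFinset _).2 ⟨h, hf⟩

end Order.PartialIso

open Order in
theorem StrictMono.exists_orderIso_apply_eq {α L : Type*} [LinearOrder α] [Countable α]
    [DenselyOrdered α] [NoMinOrder α] [NoMaxOrder α] [Nonempty α] [LinearOrder L]
    {e : α → L} (he : StrictMono e) {s t : Set L} (hs : s.Finite) (f : s ≃o t) :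
    ∃ g : α ≃o α, ∀ a b (h : e a ∈ s), (f ⟨e a, h⟩ : L) = e b → g a = b := by
  obtain ⟨g, hg⟩ := (PartialIso.induced he hs f).exists_orderIso_extends
  exact ⟨g, fun a b h hf ↦ hg (a, b) (PartialIso.mem_induced he hs f h hf)⟩

namespace Sum.Lex

variable {α β γ : Type*}

theorem eq_inl_or_eq_inr_inl_or_eq_inr_inr (z : α ⊕ₗ (β ⊕ₗ γ)) :
    (∃ a, z = inlₗ a) ∨ (∃ b, z = inrₗ (inlₗ b)) ∨ ∃ c, z = inrₗ (inrₗ c) := by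
  rcases z with a | b | c
  · exact .inl ⟨a, rfl⟩
  · exact .inr (.inl ⟨b, rfl⟩)
  · exact .inr (.inr ⟨c, rfl⟩)

variable [LT α] [Preorder β] [LT γ]

theorem exists_eq_inl_of_lt_inr_inl_bot [OrderBot β] {z : α ⊕ₗ (β ⊕ₗ γ)}
    (h : z < inrₗ (inlₗ ⊥)) : ∃ a, z = inlₗ a := by
  rcases z with a | b | c
  · exact ⟨a, rfl⟩
  · exact absurd (inl_lt_inl_iff.1 (inr_lt_inr_iff.1 h)) not_lt_bot
  · exact absurd (inr_lt_inr_iff.1 h) not_inr_lt_inl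

theorem exists_eq_inr_inr_of_inr_inl_top_lt [OrderTop β] {z : α ⊕ₗ (β ⊕ₗ γ)}
    (h : inrₗ (inlₗ ⊤) < z) : ∃ c, z = inrₗ (inrₗ c) := by
  rcases z with a | b | c
  · exact absurd h not_inr_lt_inl
  · exact absurd (inl_lt_inl_iff.1 (inr_lt_inr_iff.1 h)) not_top_lt
  · exact ⟨c, rfl⟩

end Sum.Lex

open Sum Sum.Lex in
theorem weaklyHomogeneousLO_sumLex {α β γ : Type*} [LinearOrder α] [Countable α]
    [DenselyOrdered α] [NoMinOrder α] [NoMaxOrder α] [Nonempty α]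
    [LinearOrder β] [Fintype β] [BoundedOrder β]
    [LinearOrder γ] [Countable γ] [DenselyOrdered γ] [NoMinOrder γ] [NoMaxOrder γ] [Nonempty γ] :
    WeaklyHomogeneousLO (α ⊕ₗ (β ⊕ₗ γ)) := by
  refine ⟨Finset.univ.image fun b ↦ inrₗ (inlₗ b), fun s t hs _ hPs f hfix ↦ ?_⟩
  have hmid (b : β) : inrₗ (inlₗ b) ∈ s := hPs (by simp)
  have hfmid (b : β) (h : inrₗ (inlₗ b) ∈ s) : (f ⟨_, h⟩ : α ⊕ₗ (β ⊕ₗ γ)) = inrₗ (inlₗ b) :=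
    hfix _ h (by simp)
  have hlt {x y : α ⊕ₗ (β ⊕ₗ γ)} (hx : x ∈ s) (hy : y ∈ s) :
      x < y ↔ (f ⟨x, hx⟩ : α ⊕ₗ (β ⊕ₗ γ)) < f ⟨y, hy⟩ := by
    rw [Subtype.coe_lt_coe, f.lt_iff_lt, Subtype.mk_lt_mk]
  obtain ⟨g₁, hg₁⟩ := Sum.Lex.inl_strictMono.exists_orderIso_apply_eq hs f
  obtain ⟨g₂, hg₂⟩ :=
    (Sum.Lex.inr_strictMono.comp Sum.Lex.inr_strictMono).exists_orderIso_apply_eq hs f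
  refine ⟨g₁.sumLexCongr ((OrderIso.refl β).sumLexCongr g₂), fun ⟨x, hx⟩ ↦ ?_⟩
  obtain ⟨a, rfl⟩ | ⟨b, rfl⟩ | ⟨c, rfl⟩ := eq_inl_or_eq_inr_inl_or_eq_inr_inr x
  · have hfx : (f ⟨_, hx⟩ : α ⊕ₗ (β ⊕ₗ γ)) < inrₗ (inlₗ ⊥) := by
      rw [← hfmid ⊥ (hmid ⊥)]
      exact (hlt hx (hmid ⊥)).1 (inl_lt_inr _ _)
    obtain ⟨a', ha'⟩ := exists_eq_inl_of_lt_inr_inl_bot hfx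
    rw [ha', ← hg₁ a a' hx ha']
    rfl
  · exact (hfmid b hx).symm
  · have hfx : inrₗ (inlₗ ⊤) < (f ⟨_, hx⟩ : α ⊕ₗ (β ⊕ₗ γ)) := by
      rw [← hfmid ⊤ (hmid ⊤)]
      exact (hlt (hmid ⊤) hx).1 (inr_lt_inr_iff.2 (inl_lt_inr _ _))
    obtain ⟨c', hc'⟩ := exists_eq_inr_inr_of_inr_inl_top_lt hfx
    rw [hc', ← hg₂ c c' hx hc']
    rfl

/-- For each `n ≥ 1`, the linear order `ℚ + n + ℚ` is weakly homogeneous. -/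
theorem rat_fin_rat_weaklyHomogeneous :
    ∀ n : ℕ, 1 ≤ n → WeaklyHomogeneousLO (ℚ ⊕ₗ (Fin n ⊕ₗ ℚ)) := by
  intro n hn
  have : NeZero n := ⟨by omega⟩
  exact weaklyHomogeneousLO_sumLex
end

section
/- The linear order ℚ + ℕ + ℚ (the rationals, followed by a copy of the natural numbers, followed by the rationals) is not weakly homogeneous: for every finite set P of elements there exists an order isomorphism between finite subsets fixing P pointwise that does not extend to an order automorphism. -/
/-!
In `ℚ + ℕ + ℚ` the points with an immediate successor are exactly those of the middle copy of `ℕ`.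
Automorphisms preserve this set, and since `ℕ` is well ordered they fix each of its points.
Given a finite `P`, choose consecutive middle points `n`, `n + 1` outside `P`: no point of `P`
separates them, so fixing `P` and sending `n` to `n + 1` is a partial isomorphism, and it cannot
extend to an automorphism.
-/

open Sum Set

section PartialIso

variable {α : Type*} [LinearOrder α] {P : Set α} {a b : α}

theorem swap_apply_of_mem (ha : a ∉ P) (hb : b ∉ P) {p : α} (hp : p ∈ P) :
    Equiv.swap a b p = p :=
  Equiv.swap_apply_of_ne_of_ne (ne_of_mem_of_not_mem hp ha) (ne_of_mem_of_not_mem hp hb)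

theorem strictMonoOn_swap_insert (ha : a ∉ P) (hb : b ∉ P) (hab : ∀ p ∈ P, p < a ↔ p < b) :
    StrictMonoOn (Equiv.swap a b) (insert a P) := by
  rintro x (rfl | hx) y (rfl | hy) hxy
  · exact absurd hxy (lt_irrefl _)
  · rw [Equiv.swap_apply_left, swap_apply_of_mem ha hb hy]
    exact lt_of_le_of_ne (not_lt.mp ((hab y hy).not.mp hxy.not_gt))
      (ne_of_mem_of_not_mem hy hb).symm
  · rw [Equiv.swap_apply_left, swap_apply_of_mem ha hb hx]
    exact (hab x hx).mp hxy
  · rwa [swap_apply_of_mem ha hb hx, swap_apply_of_mem ha hb hy]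

theorem image_swap_insert (ha : a ∉ P) (hb : b ∉ P) :
    Equiv.swap a b '' insert a P = insert b P := by
  rw [image_insert_eq, Equiv.swap_apply_left, image_congr (g := id), image_id]
  exact fun p => swap_apply_of_mem ha hb

theorem exists_orderIso_insert_fixing (ha : a ∉ P) (hb : b ∉ P)
    (hab : ∀ p ∈ P, p < a ↔ p < b) :
    ∃ f : (insert a P : Set α) ≃o (insert b P : Set α),
      (∀ p (hp : p ∈ insert a P), p ∈ P → (f ⟨p, hp⟩ : α) = p) ∧
        (f ⟨a, mem_insert a P⟩ : α) = b :=
  ⟨((strictMonoOn_swap_insert ha hb hab).orderIso _ _).trans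
    (OrderIso.setCongr _ _ (image_swap_insert ha hb)),
    fun _ _ hp => swap_apply_of_mem ha hb hp, Equiv.swap_apply_left a b⟩

end PartialIso

theorem OrderIso.image_setOf_exists_covBy {α β : Type*} [Preorder α] [Preorder β] (g : α ≃o β) :
    g '' {x | ∃ y, x ⋖ y} = {x | ∃ y, x ⋖ y} := by
  ext x
  rw [g.image_eq_preimage_symm]
  refine ⟨fun ⟨y, hy⟩ => ⟨g y, ?_⟩, fun ⟨y, hy⟩ => ⟨g.symm y, ?_⟩⟩
  · simpa using (apply_covBy_apply_iff g).mpr hy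
  · exact (apply_covBy_apply_iff g.symm).mpr hy

def natEmb : ℕ ↪o ℚ ⊕ₗ (ℕ ⊕ₗ ℚ) :=
  OrderEmbedding.ofStrictMono (toLex ∘ inr ∘ toLex ∘ inl)
    (Sum.Lex.inr_strictMono.comp Sum.Lex.inl_strictMono)

theorem natEmb_covBy_succ (n : ℕ) : natEmb n ⋖ natEmb (n + 1) := by
  refine ⟨natEmb.strictMono n.lt_succ_self, fun y hny hyn => ?_⟩
  rcases y with q | m | q
  · exact Lex.not_inr_lt_inl hny
  · have h1 := natEmb.lt_iff_lt.mp hny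
    have h2 := natEmb.lt_iff_lt.mp hyn
    omega
  · exact Lex.not_inr_lt_inl (Lex.inr_lt_inr_iff.mp hyn)

theorem exists_covBy_iff_mem_range_natEmb {x : ℚ ⊕ₗ (ℕ ⊕ₗ ℚ)} :
    (∃ y, x ⋖ y) ↔ x ∈ range natEmb := by
  refine ⟨fun ⟨y, hxy⟩ => ?_, fun ⟨n, hn⟩ => hn ▸ ⟨_, natEmb_covBy_succ n⟩⟩
  rcases x with a | n | c
  · obtain ⟨c, hac, hcy⟩ : ∃ c, a < c ∧ toLex (inl c) < y := by
      rcases y with b | v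
      · obtain ⟨c, hac, hcb⟩ := exists_between (Lex.inl_lt_inl_iff.mp hxy.lt)
        exact ⟨c, hac, Lex.inl_lt_inl_iff.mpr hcb⟩
      · obtain ⟨c, hac⟩ := exists_gt a
        exact ⟨c, hac, Lex.inl_lt_inr _ _⟩
    exact (hxy.2 (Lex.inl_lt_inl_iff.mpr hac) hcy).elim
  · exact ⟨n, rfl⟩
  · rcases y with b | m | d
    · exact absurd hxy.lt Lex.not_inr_lt_inl
    · exact absurd (Lex.inr_lt_inr_iff.mp hxy.lt) Lex.not_inr_lt_inl
    · obtain ⟨e, hce, hed⟩ :=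
        exists_between (Lex.inr_lt_inr_iff.mp (Lex.inr_lt_inr_iff.mp hxy.lt))
      exact (hxy.2 (Lex.inr_lt_inr_iff.mpr (Lex.inr_lt_inr_iff.mpr hce))
        (Lex.inr_lt_inr_iff.mpr (Lex.inr_lt_inr_iff.mpr hed))).elim

theorem orderIso_apply_natEmb (g : ℚ ⊕ₗ (ℕ ⊕ₗ ℚ) ≃o ℚ ⊕ₗ (ℕ ⊕ₗ ℚ)) (n : ℕ) :
    g (natEmb n) = natEmb n := by
  have hrange : range (g ∘ natEmb) = range natEmb := by
    have h := g.image_setOf_exists_covBy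
    simp only [exists_covBy_iff_mem_range_natEmb, ofPred_mem_eq] at h
    rw [range_comp, h]
  exact congrFun ((g.strictMono.comp natEmb.strictMono).range_inj natEmb.strictMono |>.mp hrange) n

/-- The linear order `ℚ + ℕ + ℚ` is not weakly homogeneous. -/
theorem rat_nat_rat_not_weaklyHomogeneous :
    ¬ WeaklyHomogeneousLO (ℚ ⊕ₗ (ℕ ⊕ₗ ℚ)) := by
  rintro ⟨P, hP⟩
  obtain ⟨N, hN⟩ := (P.finite_toSet.preimage natEmb.injective.injOn).bddAbove
  have notMem : ∀ n, N < n → natEmb n ∉ (P : Set _) := fun n hn hnP => (hN hnP).not_gt hn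
  have hcut : ∀ p ∈ (P : Set _), p < natEmb (N + 1) ↔ p < natEmb (N + 1 + 1) := fun p hp => by
    rw [(natEmb_covBy_succ (N + 1)).lt_iff_le_left,
      (ne_of_mem_of_not_mem hp (notMem _ N.lt_succ_self)).le_iff_lt]
  obtain ⟨f, hfixP, hfa⟩ :=
    exists_orderIso_insert_fixing (notMem _ N.lt_succ_self) (notMem _ (by omega)) hcut
  obtain ⟨g, hg⟩ := hP _ _ (P.finite_toSet.insert _) (P.finite_toSet.insert _)
    (subset_insert _ _) f hfixP
  have hmoved := hg ⟨natEmb (N + 1), mem_insert _ _⟩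
  rw [hfa, orderIso_apply_natEmb] at hmoved
  exact (N + 1).succ_ne_self (natEmb.injective hmoved).symm
end

section
/- Let L be a linear order with successor and predecessor functions s, p (where s(x) is the least element greater than x if it exists, else x, and p(x) is the greatest element less than x if it exists, else x). If the expansion (L, <, s, p) is homogeneous, then for every block type t occurring in more than one block of L, the set of blocks of type t has no first block, no last block, and is dense in the interval of Bk(L) that it spans. -/
/-- A set is closed under the successor and predecessor functions. -/
def IsSPClosed {α : Type*} (s p : α → α) (A : Set α) : Prop :=
  ∀ x ∈ A, s x ∈ A ∧ p x ∈ A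

/-- `A` is a finitely generated sp-substructure: it is closed under `s` and `p`
and is the smallest such set containing some finite set. -/
def IsFinGenSP {α : Type*} (s p : α → α) (A : Set α) : Prop :=
  IsSPClosed s p A ∧ ∃ F : Finset α, ↑F ⊆ A ∧
    ∀ B : Set α, IsSPClosed s p B → ↑F ⊆ B → A ⊆ B

/-- `(α, <, s, p)` is homogeneous: every isomorphism between finitely generated
sp-substructures (preserving the order and commuting with `s` and `p`) extends
to an automorphism of the whole structure. -/
def SPHomogeneous {α : Type*} [LinearOrder α] (s p : α → α) : Prop :=
  ∀ (A B : Set α) (f : α → α), IsFinGenSP s p A → IsFinGenSP s p B →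
    Set.BijOn f A B →
    (∀ x ∈ A, ∀ y ∈ A, x < y → f x < f y) →
    (∀ x ∈ A, f (s x) = s (f x)) → (∀ x ∈ A, f (p x) = p (f x)) →
    ∃ g : α ≃o α, (∀ x, g (s x) = s (g x)) ∧ (∀ x, g (p x) = p (g x)) ∧
      ∀ x ∈ A, g x = f x

/-!
Since `s` and `p` never leave a block, a map sending one block isomorphically onto another and
fixing every other point commutes with `s` and `p`. On the sp-closure of finitely many points it is
then a partial isomorphism, which homogeneity extends to an automorphism. So an isomorphism
between the blocks of `a` and `b` yields an automorphism `g` moving the block of `a` onto that of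
`b`, and `g⁻¹ a` lies in a block of the same type on the other side of `a`: there is no first
and no last block of the type. For density between blocks `u < v`, with `w ≤ u` and `v ≤ w'` of
the type, let `g` move the block of `w` onto that of `w'`. Then `u' = g⁻¹ u` lies below `w`, and
an automorphism moving the block of `u'` onto that of `u` while fixing the block of `v` carries
`w` strictly between `u` and `v`.
-/

section

open Set
open scoped Interval

variable {α : Type*}

section SPClosure

variable (s p : α → α)

def spCl (X : Set α) : Set α := ⋂₀ {B | IsSPClosed s p B ∧ X ⊆ B}

variable {s p}

theorem isSPClosed_spCl (X : Set α) : IsSPClosed s p (spCl s p X) := fun x hx =>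
  ⟨fun B hB => (hB.1 x (hx B hB)).1, fun B hB => (hB.1 x (hx B hB)).2⟩

theorem subset_spCl (X : Set α) : X ⊆ spCl s p X := fun _ hx _ hB => hB.2 hx

theorem spCl_subset {X B : Set α} (hB : IsSPClosed s p B) (hX : X ⊆ B) : spCl s p X ⊆ B :=
  fun _ hx => hx B ⟨hB, hX⟩

theorem isFinGenSP_spCl (F : Finset α) : IsFinGenSP s p (spCl s p F) :=
  ⟨isSPClosed_spCl _, F, subset_spCl _, fun _ => spCl_subset⟩

theorem image_spCl {f : α → α} (hfs : Function.Commute f s) (hfp : Function.Commute f p)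
    (X : Set α) : f '' spCl s p X = spCl s p (f '' X) := by
  refine Subset.antisymm (image_subset_iff.2 (spCl_subset (fun x hx => ⟨?_, ?_⟩)
    (image_subset_iff.1 (subset_spCl _)))) (spCl_subset ?_ (image_mono (subset_spCl X)))
  · rw [mem_preimage, hfs.eq]
    exact (isSPClosed_spCl _ _ hx).1
  · rw [mem_preimage, hfp.eq]
    exact (isSPClosed_spCl _ _ hx).2
  · rintro _ ⟨x, hx, rfl⟩
    exact ⟨⟨s x, (isSPClosed_spCl X x hx).1, hfs.eq x⟩,
      ⟨p x, (isSPClosed_spCl X x hx).2, hfp.eq x⟩⟩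

end SPClosure

variable [LinearOrder α]

namespace FinFar

variable {a b x y z : α}

theorem iff_finite_uIcc : FinFar x y ↔ [[x, y]].Finite := Iff.rfl

@[refl]
protected theorem refl (x : α) : FinFar x x := by
  simp [iff_finite_uIcc]

protected theorem symm (h : FinFar x y) : FinFar y x := by
  rwa [iff_finite_uIcc, uIcc_comm]

protected theorem trans (hxy : FinFar x y) (hyz : FinFar y z) : FinFar x z :=
  (hxy.union hyz).subset uIcc_subset_uIcc_union_uIcc

theorem of_mem_uIcc (h : FinFar a b) (hz : z ∈ [[a, b]]) : FinFar a z :=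
  h.subset (uIcc_subset_uIcc_left hz)

theorem of_covBy (h : x ⋖ y) : FinFar x y := by
  simp [iff_finite_uIcc, uIcc_of_le h.le, h.Icc_eq]

theorem map (g : α ≃o α) (h : FinFar x y) : FinFar (g x) (g y) := by
  refine (h.image g).subset fun z hz => ⟨g.symm z, ?_, g.apply_symm_apply z⟩
  have hz' := g.symm.monotone.mapsTo_uIcc hz
  rwa [g.symm_apply_apply, g.symm_apply_apply] at hz'

theorem orderIso_apply_iff (g : α ≃o α) : FinFar (g x) (g y) ↔ FinFar x y :=
  ⟨fun h => by simpa using h.map g.symm, map g⟩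

theorem lt_of_lt (hab : a < b) (h : ¬FinFar a b) (hx : FinFar a x) (hy : FinFar b y) :
    x < y := by
  by_contra! hyx
  rcases le_total y a with hya | hay
  · exact h (hy.of_mem_uIcc (mem_uIcc_of_ge hya hab.le)).symm
  · exact h ((hx.of_mem_uIcc (mem_uIcc_of_le hay hyx)).trans hy.symm)

theorem lt_iff_lt (h : ¬FinFar a b) (hx : FinFar a x) (hy : FinFar b y) : x < y ↔ a < b := by
  rcases lt_trichotomy a b with hab | rfl | hba
  · exact iff_of_true (lt_of_lt hab h hx hy) hab
  · exact absurd (.refl a) h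
  · exact iff_of_false (lt_of_lt hba (mt FinFar.symm h) hy hx).asymm hba.asymm

end FinFar

theorem ordConnected_setOf_finFar (a : α) : OrdConnected {y | FinFar a y} :=
  ⟨fun _ hx _ hy _ hz => hx.trans ((hx.symm.trans hy).of_mem_uIcc (Icc_subset_uIcc hz))⟩

abbrev Block (a : α) : Type _ := {y // FinFar a y}

namespace Block

variable {a b : α}

theorem coe_covBy_coe {x y : Block a} : (x : α) ⋖ y ↔ x ⋖ y :=
  (OrdConnected.apply_covBy_apply_iff (OrderEmbedding.subtype fun y => FinFar a y) (by
    simpa only [OrderEmbedding.coe_subtype, Subtype.range_coe_subtype] using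
      ordConnected_setOf_finFar a))

def orderIsoOfFinFar (g : α ≃o α) (h : FinFar (g a) b) : Block a ≃o Block b where
  toEquiv := (g : α ≃ α).subtypeEquiv fun _ =>
    (FinFar.orderIso_apply_iff g).symm.trans ⟨h.symm.trans, h.trans⟩
  map_rel_iff' := g.le_iff_le

end Block

def IsSuccFun (s : α → α) : Prop :=
  ∀ x, (∀ y, x ⋖ y → s x = y) ∧ ((∀ y, ¬x ⋖ y) → s x = x)

def IsPredFun (p : α → α) : Prop :=
  ∀ x, (∀ y, y ⋖ x → p x = y) ∧ ((∀ y, ¬y ⋖ x) → p x = x)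

section SuccPred

variable {s p f : α → α}

theorem IsSuccFun.finFar (hs : IsSuccFun s) (x : α) : FinFar x (s x) := by
  by_cases h : ∃ y, x ⋖ y
  · obtain ⟨y, hy⟩ := h
    rw [(hs x).1 y hy]
    exact .of_covBy hy
  · rw [(hs x).2 (not_exists.mp h)]

theorem IsPredFun.finFar (hp : IsPredFun p) (x : α) : FinFar x (p x) := by
  by_cases h : ∃ y, y ⋖ x
  · obtain ⟨y, hy⟩ := h
    rw [(hp x).1 y hy]
    exact (FinFar.of_covBy hy).symm
  · rw [(hp x).2 (not_exists.mp h)]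

theorem spCl_subset_setOf_exists_finFar (hs : IsSuccFun s) (hp : IsPredFun p) (X : Set α) :
    spCl s p X ⊆ {y | ∃ x ∈ X, FinFar x y} :=
  spCl_subset (fun _ ⟨x, hx, hxy⟩ =>
      ⟨⟨x, hx, hxy.trans (hs.finFar _)⟩, ⟨x, hx, hxy.trans (hp.finFar _)⟩⟩)
    fun x hx => ⟨x, hx, .refl x⟩

theorem IsSuccFun.commute (hs : IsSuccFun s) (hcov : ∀ x y, FinFar x y → (f x ⋖ f y ↔ x ⋖ y))
    (hsurj : ∀ x z, FinFar (f x) z → ∃ y, FinFar x y ∧ f y = z) : Function.Commute f s := by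
  intro x
  by_cases h : ∃ y, x ⋖ y
  · obtain ⟨y, hy⟩ := h
    rw [(hs x).1 y hy, (hs (f x)).1 (f y) ((hcov x y (.of_covBy hy)).2 hy)]
  · rw [(hs x).2 (not_exists.mp h), (hs (f x)).2 fun z hz => ?_]
    obtain ⟨y, hxy, rfl⟩ := hsurj x z (.of_covBy hz)
    exact h ⟨y, (hcov x y hxy).1 hz⟩

theorem IsPredFun.commute (hp : IsPredFun p) (hcov : ∀ x y, FinFar x y → (f x ⋖ f y ↔ x ⋖ y))
    (hsurj : ∀ x z, FinFar (f x) z → ∃ y, FinFar x y ∧ f y = z) : Function.Commute f p := by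
  intro x
  by_cases h : ∃ y, y ⋖ x
  · obtain ⟨y, hy⟩ := h
    rw [(hp x).1 y hy, (hp (f x)).1 (f y) ((hcov y x (.of_covBy hy)).2 hy)]
  · rw [(hp x).2 (not_exists.mp h), (hp (f x)).2 fun z hz => ?_]
    obtain ⟨y, hxy, rfl⟩ := hsurj x z (FinFar.of_covBy hz).symm
    exact h ⟨y, (hcov y x hxy.symm).1 hz⟩

end SuccPred

section ExtendBlockIso

variable {a b x y z : α} (e : Block a ≃o Block b)

open Classical in
noncomputable def extendBlockIso : α → α :=
  fun x => if h : FinFar a x then e ⟨x, h⟩ else x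

theorem extendBlockIso_of_finFar (h : FinFar a x) : extendBlockIso e x = e ⟨x, h⟩ :=
  dif_pos h

theorem extendBlockIso_of_not_finFar (h : ¬FinFar a x) : extendBlockIso e x = x :=
  dif_neg h

theorem finFar_extendBlockIso (h : FinFar a x) : FinFar b (extendBlockIso e x) := by
  rw [extendBlockIso_of_finFar e h]
  exact (e _).2

theorem strictMonoOn_extendBlockIso : StrictMonoOn (extendBlockIso e) {x | FinFar a x} := by
  intro x hx y hy hxy
  rw [extendBlockIso_of_finFar e hx, extendBlockIso_of_finFar e hy]
  exact e.strictMono hxy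

theorem extendBlockIso_covBy_iff (hxy : FinFar x y) :
    extendBlockIso e x ⋖ extendBlockIso e y ↔ x ⋖ y := by
  by_cases hx : FinFar a x
  · rw [extendBlockIso_of_finFar e hx, extendBlockIso_of_finFar e (hx.trans hxy),
      Block.coe_covBy_coe, apply_covBy_apply_iff, ← Block.coe_covBy_coe]
  · rw [extendBlockIso_of_not_finFar e hx,
      extendBlockIso_of_not_finFar e fun hy => hx (hy.trans hxy.symm)]

theorem exists_extendBlockIso_eq (h : FinFar (extendBlockIso e x) z) :
    ∃ y, FinFar x y ∧ extendBlockIso e y = z := by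
  by_cases hx : FinFar a x
  · rw [extendBlockIso_of_finFar e hx] at h
    have hz : FinFar b z := (e _).2.trans h
    refine ⟨e.symm ⟨z, hz⟩, hx.symm.trans (e.symm _).2, ?_⟩
    rw [extendBlockIso_of_finFar e (e.symm _).2]
    simp
  · rw [extendBlockIso_of_not_finFar e hx] at h
    exact ⟨z, h, extendBlockIso_of_not_finFar e fun hz => hx (hz.trans h.symm)⟩

end ExtendBlockIso

namespace SPHomogeneous

theorem exists_orderIso_eqOn {s p : α → α} (hhom : SPHomogeneous s p)
    (X : Finset α) {f : α → α} (hf : StrictMonoOn f (spCl s p X)) (hfs : Function.Commute f s)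
    (hfp : Function.Commute f p) : ∃ g : α ≃o α, EqOn g f (spCl s p X) := by
  classical
  have himg : f '' spCl s p X = spCl s p ↑(X.image f) := by
    rw [Finset.coe_image, image_spCl hfs hfp]
  obtain ⟨g, -, -, hg⟩ := hhom _ _ f (isFinGenSP_spCl X) (himg ▸ isFinGenSP_spCl _)
    (himg ▸ hf.injOn.bijOn_image) (fun _ hx _ hy => hf hx hy) (fun x _ => hfs.eq x)
    (fun x _ => hfp.eq x)
  exact ⟨g, hg⟩

variable {s p : α → α} (hs : IsSuccFun s) (hp : IsPredFun p) (hhom : SPHomogeneous s p)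
  {a b c : α}

include hs hp hhom

theorem exists_orderIso_eqOn_extendBlockIso (e : Block a ≃o Block b) (X : Finset α)
    (hX : StrictMonoOn (extendBlockIso e) (spCl s p X)) :
    ∃ g : α ≃o α, EqOn g (extendBlockIso e) (spCl s p X) :=
  hhom.exists_orderIso_eqOn X hX
    (hs.commute (fun _ _ => extendBlockIso_covBy_iff e) fun _ _ => exists_extendBlockIso_eq e)
    (hp.commute (fun _ _ => extendBlockIso_covBy_iff e) fun _ _ => exists_extendBlockIso_eq e)

theorem exists_orderIso_finFar (e : Block a ≃o Block b) : ∃ g : α ≃o α, FinFar (g a) b := by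
  have hX : spCl s p ↑({a} : Finset α) ⊆ {x | FinFar a x} := by
    simpa using spCl_subset_setOf_exists_finFar hs hp {a}
  obtain ⟨g, hg⟩ := exists_orderIso_eqOn_extendBlockIso hs hp hhom e {a}
    ((strictMonoOn_extendBlockIso e).mono hX)
  refine ⟨g, ?_⟩
  rw [hg (subset_spCl _ (by simp))]
  exact (finFar_extendBlockIso e (.refl a)).symm

theorem exists_orderIso_finFar_of_lt (e : Block a ≃o Block b) (hac : a < c) (hbc : b < c)
    (hac' : ¬FinFar a c) (hbc' : ¬FinFar b c) : ∃ g : α ≃o α, FinFar (g a) b ∧ g c = c := by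
  have hfix : ∀ y, FinFar c y → extendBlockIso e y = y := fun y hy =>
    extendBlockIso_of_not_finFar e fun h => hac' (h.trans hy.symm)
  have hmono : StrictMonoOn (extendBlockIso e) {y | FinFar a y ∨ FinFar c y} := by
    rintro x (hx | hx) y (hy | hy) hxy
    · exact strictMonoOn_extendBlockIso e hx hy hxy
    · rw [hfix y hy]
      exact FinFar.lt_of_lt hbc hbc' (finFar_extendBlockIso e hx) hy
    · exact absurd hxy (FinFar.lt_of_lt hac hac' hy hx).asymm
    · rwa [hfix x hx, hfix y hy]
  have hX : spCl s p ↑({a, c} : Finset α) ⊆ {y | FinFar a y ∨ FinFar c y} := by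
    simpa using spCl_subset_setOf_exists_finFar hs hp {a, c}
  obtain ⟨g, hg⟩ := exists_orderIso_eqOn_extendBlockIso hs hp hhom e {a, c} (hmono.mono hX)
  refine ⟨g, ?_, ?_⟩
  · rw [hg (subset_spCl _ (by simp))]
    exact (finFar_extendBlockIso e (.refl a)).symm
  · rw [hg (subset_spCl _ (by simp)), hfix c (.refl c)]

theorem exists_lt_and_exists_gt (hab : ¬FinFar a b) (e : Block a ≃o Block b) :
    (∃ z < a, ¬FinFar z a ∧ Nonempty (Block z ≃o Block a)) ∧
      (∃ z > a, ¬FinFar z a ∧ Nonempty (Block z ≃o Block a)) := by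
  obtain ⟨g, hg⟩ := exists_orderIso_finFar hs hp hhom e
  have hgz : g (g.symm a) = a := g.apply_symm_apply a
  have hfar : ¬FinFar (g.symm a) a := by
    rw [← FinFar.orderIso_apply_iff g, hgz]
    exact fun h => hab (h.trans hg)
  have hiso : Nonempty (Block (g.symm a) ≃o Block a) := ⟨Block.orderIsoOfFinFar g (by rw [hgz])⟩
  have hside : g.symm a < a ↔ a < b := by
    rw [← g.lt_iff_lt, hgz]
    exact FinFar.lt_iff_lt hab (.refl a) hg.symm
  have hza : g.symm a ≠ a := fun h => hfar (by rw [h])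
  rcases lt_or_gt_of_ne fun h : a = b => hab (h ▸ .refl a) with hab' | hba
  · exact ⟨⟨g.symm a, hside.2 hab', hfar, hiso⟩, ⟨b, hab', mt FinFar.symm hab, ⟨e.symm⟩⟩⟩
  · exact ⟨⟨b, hba, mt FinFar.symm hab, ⟨e.symm⟩⟩,
      ⟨g.symm a, (lt_or_gt_of_ne hza).resolve_left fun h => hba.asymm (hside.1 h), hfar, hiso⟩⟩

theorem exists_between {u v w w' : α} (huv : u < v) (hfar : ¬FinFar u v) (hwu : w ≤ u)
    (hvw : v ≤ w') (e : Block w ≃o Block w') :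
    ∃ z, u < z ∧ z < v ∧ ¬FinFar u z ∧ ¬FinFar v z ∧ Nonempty (Block z ≃o Block w) := by
  obtain ⟨g, hg⟩ := exists_orderIso_finFar hs hp hhom e
  set u' := g.symm u
  have hgu' : g u' = u := g.apply_symm_apply u
  have huw' : ¬FinFar u w' := fun h => hfar (h.of_mem_uIcc (mem_uIcc_of_le huv.le hvw))
  have hu'w : u' < w := by
    rw [← g.lt_iff_lt, hgu']
    exact FinFar.lt_of_lt (huv.trans_le hvw) huw' (.refl u) hg.symm
  have hu'w' : ¬FinFar u' w := by
    rw [← FinFar.orderIso_apply_iff g, hgu']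
    exact fun h => huw' (h.trans hg)
  have hu'u : ¬FinFar u' u := fun h => hu'w' (h.of_mem_uIcc (mem_uIcc_of_le hu'w.le hwu))
  have hu'v : ¬FinFar u' v := fun h =>
    hu'u (h.of_mem_uIcc (mem_uIcc_of_le (hu'w.le.trans hwu) huv.le))
  have hwv : ¬FinFar w v := fun h =>
    hfar ((h.of_mem_uIcc (mem_uIcc_of_le hwu huv.le)).symm.trans h)
  obtain ⟨G, hGu, hGv⟩ := exists_orderIso_finFar_of_lt hs hp hhom
    (Block.orderIsoOfFinFar g (by rw [hgu'])) ((hu'w.trans_le hwu).trans huv) huv hu'v hfar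
  have hGu'w : ¬FinFar (G u') (G w) := (FinFar.orderIso_apply_iff G).not.2 hu'w'
  refine ⟨G w, ?_, ?_, ?_, ?_, ⟨Block.orderIsoOfFinFar G.symm (by rw [G.symm_apply_apply])⟩⟩
  · exact FinFar.lt_of_lt (G.lt_iff_lt.2 hu'w) hGu'w hGu (.refl _)
  · rw [← hGv]
    exact G.lt_iff_lt.2 (hwu.trans_lt huv)
  · exact fun h => hGu'w (hGu.trans h)
  · rw [← hGv, FinFar.orderIso_apply_iff]
    exact fun h => hwv h.symm

end SPHomogeneous

end

/-- If `(L, <, s, p)` is sp-homogeneous, then for every block type occurring in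
more than one block (witnessed by `x₀, x₁` in distinct order-isomorphic blocks),
the set of blocks of that type has no first block, no last block, and is dense in
the interval of blocks that it spans. -/
theorem spHomogeneous_blocks_dense {α : Type*} [LinearOrder α] (s p : α → α)
    (hs : ∀ x : α, (∀ y, x ⋖ y → s x = y) ∧ ((∀ y, ¬ x ⋖ y) → s x = x))
    (hp : ∀ x : α, (∀ y, y ⋖ x → p x = y) ∧ ((∀ y, ¬ y ⋖ x) → p x = x))
    (hhom : SPHomogeneous s p)
    (x₀ x₁ : α) (hne : ¬ FinFar x₀ x₁)
    (htype : Nonempty ({y // FinFar x₀ y} ≃o {y // FinFar x₁ y})) :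
    -- no first block of this type
    (∀ x : α, Nonempty ({y // FinFar x y} ≃o {y // FinFar x₀ y}) →
      ∃ x', x' < x ∧ ¬ FinFar x' x ∧
        Nonempty ({y // FinFar x' y} ≃o {y // FinFar x₀ y})) ∧
    -- no last block of this type
    (∀ x : α, Nonempty ({y // FinFar x y} ≃o {y // FinFar x₀ y}) →
      ∃ x', x < x' ∧ ¬ FinFar x' x ∧
        Nonempty ({y // FinFar x' y} ≃o {y // FinFar x₀ y})) ∧
    -- density in the spanned interval: between any two distinct blocks, each
    -- lying between blocks of this type, there is a block of this type
    (∀ u v : α, u < v → ¬ FinFar u v →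
      (∃ w w', w ≤ u ∧ u ≤ w' ∧
        Nonempty ({y // FinFar w y} ≃o {y // FinFar x₀ y}) ∧
        Nonempty ({y // FinFar w' y} ≃o {y // FinFar x₀ y})) →
      (∃ w w', w ≤ v ∧ v ≤ w' ∧
        Nonempty ({y // FinFar w y} ≃o {y // FinFar x₀ y}) ∧
        Nonempty ({y // FinFar w' y} ≃o {y // FinFar x₀ y})) →
      ∃ z, u < z ∧ z < v ∧ ¬ FinFar u z ∧ ¬ FinFar v z ∧
        Nonempty ({y // FinFar z y} ≃o {y // FinFar x₀ y})) := by
  have hsides : ∀ x : α, Nonempty (Block x ≃o Block x₀) →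
      (∃ z < x, ¬FinFar z x ∧ Nonempty (Block z ≃o Block x₀)) ∧
        (∃ z > x, ¬FinFar z x ∧ Nonempty (Block z ≃o Block x₀)) := by
    rintro x ⟨e₀⟩
    obtain ⟨b, hxb, ⟨e⟩⟩ : ∃ b, ¬FinFar x b ∧ Nonempty (Block x ≃o Block b) := by
      by_cases hx : FinFar x x₀
      · exact ⟨x₁, fun h => hne (hx.symm.trans h), ⟨e₀.trans htype.some⟩⟩
      · exact ⟨x₀, hx, ⟨e₀⟩⟩
    obtain ⟨⟨z, hzx, hz, ⟨ez⟩⟩, ⟨z', hxz', hz', ⟨ez'⟩⟩⟩ :=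
      hhom.exists_lt_and_exists_gt hs hp hxb e
    exact ⟨⟨z, hzx, hz, ⟨ez.trans e₀⟩⟩, ⟨z', hxz', hz', ⟨ez'.trans e₀⟩⟩⟩
  refine ⟨fun x hx => (hsides x hx).1, fun x hx => (hsides x hx).2, ?_⟩
  rintro u v huv hfar ⟨w, -, hwu, -, ⟨ew⟩, -⟩ ⟨-, w', -, hvw', -, ⟨ew'⟩⟩
  obtain ⟨z, hz⟩ := hhom.exists_between hs hp huv hfar hwu hvw' (ew.trans ew'.symm)
  exact ⟨z, hz.1, hz.2.1, hz.2.2.1, hz.2.2.2.1, hz.2.2.2.2.map (·.trans ew)⟩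
end
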